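/- arXiv:1610.03814 — 2 statements merged into one kernel-verified Lean document; each statement's English description precedes it below -/
import Mathlib

section
/- For s ∈ (0,1), the parallelogram F₀ spanned by the vectors (s, √3·s) and (2,0) is a fundamental domain for the lattice L₀ = ℤ(s, √3·s) + ℤ(-1, √3): the translates F₀ + v for v ∈ L₀ cover ℝ² and have pairwise disjoint interiors. -/
theorem stmt10 (s : ℝ) (hs : s ∈ Set.Ioo (0:ℝ) 1)
    (F0 : Set (ℝ × ℝ))
    (hF0 : F0 = {p | ∃ a b : ℝ, a ∈ Set.Ico (0:ℝ) 1 ∧ b ∈ Set.Ico (0:ℝ) 1 ∧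
      p = (a * s + b * 2, a * (Real.sqrt 3 * s))})
    (L0 : Set (ℝ × ℝ))
    (hL0 : L0 = {v | ∃ m n : ℤ, v = ((m:ℝ) * s + (n:ℝ) * (-1),
      (m:ℝ) * (Real.sqrt 3 * s) + (n:ℝ) * Real.sqrt 3)}) :
    (⋃ v ∈ L0, (fun p => p + v) '' F0) = Set.univ ∧
    L0.Pairwise (fun v w =>
      Disjoint (interior ((fun p => p + v) '' F0)) (interior ((fun p => p + w) '' F0))) := by
  obtain ⟨hs0, hs1⟩ := hs
  have h3 : (0:ℝ) < Real.sqrt 3 := Real.sqrt_pos.mpr (by norm_num)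
  subst hF0; subst hL0
  constructor
  · ext ⟨x, y⟩
    simp only [Set.mem_iUnion, Set.mem_image, Set.mem_setOf_eq, Set.mem_univ, iff_true,
      Set.mem_Ico]
    set u : ℝ := (x + y / Real.sqrt 3) / 2 with hu
    set w : ℝ := (y / Real.sqrt 3 - x) / 2 with hw
    set n : ℤ := ⌈w⌉ with hn
    set b : ℝ := (n : ℝ) - w with hb
    set A : ℝ := (u - b) / s with hA
    set m : ℤ := ⌊A⌋ with hm
    set a : ℝ := A - (m : ℝ) with ha
    have hAs : A * s = u - b := div_mul_cancel₀ _ hs0.ne'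
    have hx : u - w = x := by rw [hu, hw]; ring
    have hy : Real.sqrt 3 * (u + w) = y := by
      rw [hu, hw]; field_simp; ring
    refine ⟨_, ⟨m, n, rfl⟩, (a * s + b * 2, a * (Real.sqrt 3 * s)),
      ⟨a, b, ⟨?_, ?_⟩, ⟨?_, ?_⟩, rfl⟩, ?_⟩
    · rw [ha]; have := Int.floor_le A; linarith
    · rw [ha]; have := Int.lt_floor_add_one A; linarith
    · rw [hb]; have := Int.le_ceil w; linarith
    · rw [hb]; have := Int.ceil_lt_add_one w; linarith
    · simp only [Prod.mk_add_mk, Prod.mk.injEq]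
      constructor
      · linear_combination hAs + hb + hx
      · linear_combination Real.sqrt 3 * hAs - Real.sqrt 3 * hb + hy
  · intro v hv w' hw' hne
    obtain ⟨m, n, rfl⟩ := hv
    obtain ⟨m', n', rfl⟩ := hw'
    refine Disjoint.mono interior_subset interior_subset (Set.disjoint_left.mpr ?_)
    rintro p ⟨q, ⟨a, b, ⟨ha0, ha1⟩, ⟨hb0, hb1⟩, rfl⟩, hqp⟩
      ⟨q', ⟨a', b', ⟨ha0', ha1'⟩, ⟨hb0', hb1'⟩, rfl⟩, hqp'⟩
    have heq := hqp.trans hqp'.symm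
    simp only [Prod.mk_add_mk, Prod.mk.injEq, Set.mem_Ico] at heq ha0 ha1 hb0 hb1 ha0' ha1' hb0' hb1'
    obtain ⟨E1, E2⟩ := heq
    have key2 : (a + (m:ℝ)) * s + (n:ℝ) = (a' + (m':ℝ)) * s + (n':ℝ) := by
      have h' : Real.sqrt 3 * ((a + (m:ℝ)) * s + (n:ℝ)) =
          Real.sqrt 3 * ((a' + (m':ℝ)) * s + (n':ℝ)) := by linear_combination E2
      exact mul_left_cancel₀ h3.ne' h'
    -- from E1 and key2: n - b = n' - b'
    have hnb : (n:ℝ) - b = (n':ℝ) - b' := by linarith [E1, key2]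
    have hncast : ((n - n' : ℤ) : ℝ) = b - b' := by push_cast; linarith
    have hnn : n = n' := by
      have h1 : ((n - n' : ℤ) : ℝ) < 1 := by rw [hncast]; linarith
      have h2 : (-1 : ℝ) < ((n - n' : ℤ) : ℝ) := by rw [hncast]; linarith
      have h1' : (n - n' : ℤ) < 1 := by exact_mod_cast h1
      have h2' : (-1 : ℤ) < (n - n' : ℤ) := by exact_mod_cast h2
      omega
    subst hnn
    have hbb : b = b' := by
      have : ((n:ℝ)) - b = ((n:ℝ)) - b' := hnb
      linarith
    have ham : (a + (m:ℝ)) * s = (a' + (m':ℝ)) * s := by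
      have : ((n:ℝ)) = ((n:ℝ)) := rfl
      linarith [key2]
    have ham' : a + (m:ℝ) = a' + (m':ℝ) := mul_right_cancel₀ hs0.ne' ham
    have hmcast : ((m - m' : ℤ) : ℝ) = a' - a := by push_cast; linarith
    have hmm : m = m' := by
      have h1 : ((m - m' : ℤ) : ℝ) < 1 := by rw [hmcast]; linarith
      have h2 : (-1 : ℝ) < ((m - m' : ℤ) : ℝ) := by rw [hmcast]; linarith
      have h1' : (m - m' : ℤ) < 1 := by exact_mod_cast h1
      have h2' : (-1 : ℤ) < (m - m' : ℤ) := by exact_mod_cast h2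
      omega
    exact hne (by rw [hmm])
end

section
/- Let s ∈ (0,1) ∩ ℚ have continued fraction expansion s = [0; a₁, a₂, …, aₙ] with a₁ ≥ 2. Then R(s) = s/(1 + s - s·a₁) has continued fraction expansion [0; 1, a₂, …, aₙ]. -/
noncomputable def evalCF : List ℕ → ℝ
  | [] => 0
  | a :: l => 1 / ((a : ℝ) + evalCF l)

lemma evalCF_nonneg : ∀ l : List ℕ, 0 ≤ evalCF l
  | [] => le_refl 0
  | a :: l => by
    have h := evalCF_nonneg l
    simp only [evalCF]
    exact div_nonneg zero_le_one (add_nonneg (Nat.cast_nonneg a) h)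

theorem stmt12 (s : ℝ) (a₁ : ℕ) (rest : List ℕ)
    (hs : s ∈ Set.Ioo (0:ℝ) (1/2)) (ha : 2 ≤ a₁)
    (hcf : s = evalCF (a₁ :: rest)) :
    s / (1 + s - s * (a₁ : ℝ)) = evalCF (1 :: rest) := by
  obtain ⟨hs0, _⟩ := hs
  set t := evalCF rest with htdef
  have ht : 0 ≤ t := evalCF_nonneg rest
  have ha2 : (2:ℝ) ≤ (a₁:ℝ) := by exact_mod_cast ha
  have hden : (a₁:ℝ) + t ≠ 0 := by positivity
  have hkey : s * ((a₁:ℝ) + t) = 1 := by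
    rw [hcf]; simp only [evalCF, ← htdef]
    field_simp
  have h1 : (0:ℝ) < 1 + t := by linarith
  have hd : 1 + s - s * (a₁:ℝ) = s * (1 + t) := by nlinarith [hkey]
  rw [hd, show evalCF (1 :: rest) = 1 / (1 + t) by simp [evalCF, ← htdef]]
  field_simp
end
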